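/- Let F be a field and A1, ..., Ak be 2×2 matrices over F whose product A1 * A2 * ... * Ak equals the zero matrix. Then there exist indices 1 ≤ i ≤ j ≤ k such that Ai * A_{i+1} * ... * Aj = 0, Ai and Aj are singular, and all matrices strictly between indices i and j are invertible. -/

import Mathlib

open Matrix

private lemma vmv_decomp {F : Type*} [Field F] (B : Matrix (Fin 2) (Fin 2) F)
    (hB : B.det = 0) : ∃ u v : Fin 2 → F, B = vecMulVec u v := by
  rw [Matrix.det_fin_two] at hB
  by_cases ha : B 0 0 = 0
  · by_cases hb : B 0 1 = 0
    · refine ⟨![0, 1], ![B 1 0, B 1 1], ?_⟩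
      rw [Matrix.eta_fin_two B]
      ext i j; fin_cases i <;> fin_cases j <;> simp [vecMulVec_apply, ha, hb]
    · have hc : B 1 0 = 0 := by
        have : B 0 1 * B 1 0 = 0 := by linear_combination -hB + B 1 1 * ha
        rcases mul_eq_zero.mp this with h' | h' <;> [exact absurd h' hb; exact h']
      refine ⟨![B 0 1, B 1 1], ![0, 1], ?_⟩
      rw [Matrix.eta_fin_two B]
      ext i j; fin_cases i <;> fin_cases j <;> simp [vecMulVec_apply, ha, hc]
  · refine ⟨![B 0 0, B 1 0], ![1, (B 0 0)⁻¹ * B 0 1], ?_⟩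
    rw [Matrix.eta_fin_two B]
    ext i j; fin_cases i <;> fin_cases j <;> simp [vecMulVec_apply] <;> field_simp <;>
      linear_combination hB

private lemma mul_vmv {F : Type*} [Field F] (A : Matrix (Fin 2) (Fin 2) F) (u v : Fin 2 → F) :
    A * vecMulVec u v = vecMulVec (A.mulVec u) v := by
  ext i j
  simp [Matrix.mul_apply, vecMulVec_apply, Matrix.mulVec, dotProduct, Finset.sum_mul]
  fin_cases i <;> simp <;> ring

private lemma vmv_mul {F : Type*} [Field F] (C : Matrix (Fin 2) (Fin 2) F) (u v : Fin 2 → F) :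
    vecMulVec u v * C = vecMulVec u (Matrix.vecMul v C) := by
  ext i j
  simp [Matrix.mul_apply, vecMulVec_apply, Matrix.vecMul, dotProduct, Finset.mul_sum]
  ring

private lemma vmv_zero {F : Type*} [Field F] (u v : Fin 2 → F) (h : vecMulVec u v = 0) :
    u = 0 ∨ v = 0 := by
  by_contra hc
  push_neg at hc
  obtain ⟨i, hi⟩ := Function.ne_iff.mp hc.1
  obtain ⟨j, hj⟩ := Function.ne_iff.mp hc.2
  have h2 := congrFun (congrFun h i) j
  simp only [vecMulVec_apply, Matrix.zero_apply] at h2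
  rcases mul_eq_zero.mp h2 with h' | h'
  · exact hi (by simpa using h')
  · exact hj (by simpa using h')

private lemma key_lemma {F : Type*} [Field F] (A B C : Matrix (Fin 2) (Fin 2) F)
    (hB : B.det = 0) (h : A * B * C = 0) : A * B = 0 ∨ B * C = 0 := by
  obtain ⟨u, v, rfl⟩ := vmv_decomp B hB
  rw [mul_vmv, vmv_mul] at h
  rcases vmv_zero _ _ h with h' | h'
  · left; rw [mul_vmv, h']
    ext i j; simp [vecMulVec_apply]
  · right; rw [vmv_mul, h']
    ext i j; simp [vecMulVec_apply]

private lemma sub_split {α : Type*} (L : List α) {i m j : ℕ} (h1 : i ≤ m) (h2 : m ≤ j) :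
    (L.drop i).take (j + 1 - i) =
      (L.drop i).take (m + 1 - i) ++ (L.drop (m + 1)).take (j + 1 - (m + 1)) := by
  have e0 : j + 1 - i = (m + 1 - i) + (j - m) := by omega
  have e1 : i + (m + 1 - i) = m + 1 := by omega
  have e2 : j - m = j + 1 - (m + 1) := by omega
  rw [e0, List.take_add, List.drop_drop, e1, e2]

private lemma sub_single {α : Type*} (L : List α) {j : ℕ} (hj : j < L.length) :
    (L.drop j).take (j + 1 - j) = [L.get ⟨j, hj⟩] := by
  have e : j + 1 - j = 1 := by omega
  rw [e, List.drop_eq_getElem_cons hj, List.take_succ_cons, List.take_zero, List.get_eq_getElem]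

private lemma sub_cons {α : Type*} (L : List α) {i j : ℕ} (hij : i ≤ j) (hj : j < L.length) :
    (L.drop i).take (j + 1 - i) =
      L.get ⟨i, lt_of_le_of_lt hij hj⟩ :: (L.drop (i + 1)).take (j + 1 - (i + 1)) := by
  have e : j + 1 - i = (j + 1 - (i + 1)) + 1 := by omega
  rw [e, List.drop_eq_getElem_cons (lt_of_le_of_lt hij hj), List.take_succ_cons,
    List.get_eq_getElem]

theorem stmt_12 {F : Type*} [Field F] (L : List (Matrix (Fin 2) (Fin 2) F))
    (h : L.prod = 0) :
    ∃ (i j : ℕ) (hij : i ≤ j) (hj : j < L.length),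
      ((L.drop i).take (j + 1 - i)).prod = 0 ∧
      (L.get ⟨i, lt_of_le_of_lt hij hj⟩).det = 0 ∧
      (L.get ⟨j, hj⟩).det = 0 ∧
      ∀ (m : ℕ) (hm : m < L.length), i < m → m < j → IsUnit (L.get ⟨m, hm⟩) := by
  classical
  have hL : L ≠ [] := by
    intro he; rw [he, List.prod_nil] at h; exact one_ne_zero h
  have hn0 : 0 < L.length := List.length_pos_iff.mpr hL
  let P : ℕ → Prop := fun d => ∃ i j, i ≤ j ∧ j < L.length ∧ j - i = d ∧
      ((L.drop i).take (j + 1 - i)).prod = 0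
  have hex : ∃ d, P d := by
    refine ⟨L.length - 1, 0, L.length - 1, Nat.zero_le _, by omega, rfl, ?_⟩
    have e : L.length - 1 + 1 - 0 = L.length := by omega
    rw [List.drop_zero, e, List.take_length]; exact h
  obtain ⟨i, j, hij, hjn, hd, hzero⟩ := Nat.find_spec hex
  have hmin : ∀ i' j', i' ≤ j' → j' < L.length → j' - i' < j - i →
      ((L.drop i').take (j' + 1 - i')).prod ≠ 0 := by
    intro i' j' h1 h2 h3 hz
    rw [hd] at h3
    exact Nat.find_min hex h3 ⟨i', j', h1, h2, rfl, hz⟩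
  have hgetzero : i = j → L.get ⟨i, lt_of_le_of_lt hij hjn⟩ = 0 := by
    rintro rfl
    rw [sub_single L hjn, List.prod_singleton] at hzero
    exact hzero
  refine ⟨i, j, hij, hjn, hzero, ?_, ?_, ?_⟩
  · -- det of first entry
    rcases eq_or_lt_of_le hij with rfl | hlt
    · rw [hgetzero rfl]; simp
    · by_contra hdet
      have hu : IsUnit (L.get ⟨i, lt_of_le_of_lt hij hjn⟩) :=
        (Matrix.isUnit_iff_isUnit_det _).mpr (isUnit_iff_ne_zero.mpr hdet)
      rw [sub_cons L hij hjn, List.prod_cons] at hzero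
      have hz2 := (hu.mul_right_eq_zero).mp hzero
      exact hmin (i + 1) j (by omega) hjn (by omega) hz2
  · -- det of last entry
    rcases eq_or_lt_of_le hij with rfl | hlt
    · rw [show (⟨i, hjn⟩ : Fin L.length) = ⟨i, lt_of_le_of_lt hij hjn⟩ from rfl,
        hgetzero rfl]; simp
    · by_contra hdet
      have hu : IsUnit (L.get ⟨j, hjn⟩) :=
        (Matrix.isUnit_iff_isUnit_det _).mpr (isUnit_iff_ne_zero.mpr hdet)
      have hsp := sub_split L (show i ≤ j - 1 by omega) (show j - 1 ≤ j by omega)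
      rw [show j - 1 + 1 = j from by omega] at hsp
      rw [hsp, List.prod_append, sub_single L hjn, List.prod_singleton] at hzero
      have hz2 := (hu.mul_left_eq_zero).mp hzero
      exact hmin i (j - 1) (by omega) (by omega) (by omega)
        (by rw [show j - 1 + 1 - i = j - i from by omega]; exact hz2)
  · -- interior entries are units
    intro m hm h1 h2
    by_contra hnu
    have hdet : (L.get ⟨m, hm⟩).det = 0 := by
      by_contra hd'
      exact hnu ((Matrix.isUnit_iff_isUnit_det _).mpr (isUnit_iff_ne_zero.mpr hd'))
    set A := ((L.drop i).take (m - i)).prod with hA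
    set B := L.get ⟨m, hm⟩ with hB
    set C := ((L.drop (m + 1)).take (j + 1 - (m + 1))).prod with hC
    have hiAB : ((L.drop i).take (m + 1 - i)).prod = A * B := by
      rw [sub_split L (show i ≤ m - 1 by omega) (show m - 1 ≤ m by omega),
        show m - 1 + 1 = m from by omega, List.prod_append, sub_single L hm,
        List.prod_singleton]
    have hiBC : ((L.drop m).take (j + 1 - m)).prod = B * C := by
      rw [sub_split L (le_refl m) (show m ≤ j by omega), List.prod_append, sub_single L hm,
        List.prod_singleton]
    have habc : A * B * C = 0 := by
      have hsp := sub_split L (show i ≤ m by omega) (show m ≤ j by omega)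
      rw [hsp, List.prod_append, hiAB] at hzero
      rw [mul_assoc] at hzero ⊢
      exact hzero
    rcases key_lemma A B C hdet habc with hz | hz
    · exact hmin i m (by omega) hm (by omega) (hiAB.trans hz)
    · exact hmin m j (by omega) hjn (by omega) (hiBC.trans hz)
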